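/- Let X be a normal projective variety over a field k with H^0(X, O_X) = k, and let D_1, …, D_s be Weil divisors on X whose classes are linearly independent over Z in Cl(X) and such that R(X; D_1, …, D_s) is Noetherian. Then R(X; D_1, …, D_s) is a local Z^s-graded k-domain; that is, its degree-0 component equals k and the ideal generated by all homogeneous elements of degree different from 0 is a proper ideal (hence the unique maximal homogeneous ideal). -/

import Mathlib

set_option maxHeartbeats 1000000
set_option synthInstance.maxHeartbeats 400000

/-!
Scaffold: an abstract divisor-theoretic model of a normal projective variety `X` over a
field `k`.  A normal projective variety is encoded by its function field `K = k(X)`, the set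
`PrimeDiv` of codimension-one closed subvarieties, and the order functions
`div f = div_X(f)` of rational functions, together with the standard axioms these satisfy.
Weil divisors are finitely supported functions `PrimeDiv →₀ ℤ`; for a Weil divisor `D`,
`H⁰(X, O_X(D)) = { f ∈ k(X) | f = 0 or div f + D ≥ 0 }`.
-/

noncomputable section

/-- Divisor-theoretic data of a normal projective variety over `k` with `H⁰(X, O_X) = k`. -/
structure NPVariety (k : Type) [Field k] : Type 1 where
  /-- the function field `k(X)` -/
  K : Type
  [fieldK : Field K]
  [algK : Algebra k K]
  /-- the set of codimension-one closed subvarieties (prime divisors) of `X` -/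
  PrimeDiv : Type
  /-- `div f v` is the order of vanishing of the rational function `f` along `v`
  (with the convention `div 0 = 0`). -/
  div : K → PrimeDiv → ℤ
  div_zero : div 0 = 0
  div_support_finite : ∀ f : K, (Function.support (div f)).Finite
  div_mul : ∀ {f g : K}, f ≠ 0 → g ≠ 0 → div (f * g) = div f + div g
  div_algebraMap : ∀ c : k, div (algebraMap k K c) = 0
  div_add_min : ∀ {f g : K}, f ≠ 0 → g ≠ 0 → f + g ≠ 0 →
    ∀ v, min (div f v) (div g v) ≤ div (f + g) v
  /-- `H⁰(X, O_X) = k`: a rational function regular everywhere is a constant. -/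
  const_of_nonneg : ∀ f : K, f ≠ 0 → (∀ v, 0 ≤ div f v) → ∃ c : k, f = algebraMap k K c
  /-- the predicate "`D` is an ample Cartier divisor" -/
  IsAmpleCartier : (PrimeDiv →₀ ℤ) → Prop
  /-- the predicate "`D` is a very ample Cartier divisor" -/
  IsVeryAmpleCartier : (PrimeDiv →₀ ℤ) → Prop
  veryAmple_ample : ∀ D, IsVeryAmpleCartier D → IsAmpleCartier D
  /-- ample Cartier divisors exist (`X` is projective) -/
  ample_exists : ∃ D, IsAmpleCartier D
  /-- ampleness only depends on the linear equivalence class -/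
  ample_congr : ∀ D E : PrimeDiv →₀ ℤ, (∃ f : K, f ≠ 0 ∧ ∀ v, div f v = D v - E v) →
    IsAmpleCartier D → IsAmpleCartier E
  /-- a canonical divisor `K_X` of `X` -/
  canonicalDiv : PrimeDiv →₀ ℤ
  /-- the dimension of `X` -/
  dimX : ℕ

attribute [instance] NPVariety.fieldK NPVariety.algK

namespace NPVariety

variable {k : Type} [Field k] (V : NPVariety k)

/-- Linear equivalence of Weil divisors: `E ∼ F` iff `E - F` is a principal divisor. -/
def LinEquiv (E F : V.PrimeDiv →₀ ℤ) : Prop :=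
  ∃ f : V.K, f ≠ 0 ∧ ∀ v, V.div f v = E v - F v

lemma algebraMap_ne_zero {c : k} (hc : c ≠ 0) : algebraMap k V.K c ≠ 0 :=
  fun h => hc ((algebraMap k V.K).injective (by rw [h, map_zero]))

lemma div_one : V.div 1 = 0 := by
  have := V.div_algebraMap 1
  rwa [map_one] at this

/-- `H⁰(X, O_X(D))` for a (not necessarily finitely supported) divisor `D`,
as a `k`-subspace of the function field. -/
def H0 (D : V.PrimeDiv → ℤ) : Submodule k V.K where
  carrier := {f | f = 0 ∨ ∀ v, 0 ≤ V.div f v + D v}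
  zero_mem' := Or.inl rfl
  add_mem' := by
    rintro a b (rfl | ha) hb
    · simpa using hb
    rcases hb with rfl | hb
    · exact Or.inr (by simpa using ha)
    by_cases ha0 : a = 0
    · subst ha0; exact Or.inr (by simpa using hb)
    by_cases hb0 : b = 0
    · subst hb0; exact Or.inr (by simpa using ha)
    by_cases hab : a + b = 0
    · exact Or.inl hab
    refine Or.inr fun v => ?_
    have h1 := V.div_add_min ha0 hb0 hab v
    have h2 := ha v
    have h3 := hb v
    rcases le_total (V.div a v) (V.div b v) with h | h
    · have : min (V.div a v) (V.div b v) = V.div a v := min_eq_left h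
      omega
    · have : min (V.div a v) (V.div b v) = V.div b v := min_eq_right h
      omega
  smul_mem' := by
    rintro c x (rfl | hx)
    · exact Or.inl (smul_zero c)
    by_cases hc : c = 0
    · subst hc; exact Or.inl (zero_smul k x)
    by_cases hx0 : x = 0
    · subst hx0; exact Or.inl (smul_zero c)
    refine Or.inr fun v => ?_
    have h1 : c • x = algebraMap k V.K c * x := Algebra.smul_def c x
    rw [h1, V.div_mul (V.algebraMap_ne_zero hc) hx0, V.div_algebraMap]
    simpa using hx v

lemma H0_mono {D E : V.PrimeDiv → ℤ} (h : ∀ v, D v ≤ E v) : V.H0 D ≤ V.H0 E := by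
  rintro f (rfl | hf)
  · exact (V.H0 E).zero_mem
  exact Or.inr fun v => le_trans (hf v) (by have := h v; omega)

lemma H0_mul_mem {D E : V.PrimeDiv → ℤ} {f g : V.K}
    (hf : f ∈ V.H0 D) (hg : g ∈ V.H0 E) : f * g ∈ V.H0 (D + E) := by
  rcases hf with rfl | hf
  · rw [zero_mul]; exact (V.H0 _).zero_mem
  rcases hg with rfl | hg
  · rw [mul_zero]; exact (V.H0 _).zero_mem
  by_cases hf0 : f = 0
  · subst hf0; rw [zero_mul]; exact (V.H0 _).zero_mem
  by_cases hg0 : g = 0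
  · subst hg0; rw [mul_zero]; exact (V.H0 _).zero_mem
  refine Or.inr fun v => ?_
  rw [V.div_mul hf0 hg0]
  have := hf v; have := hg v
  simp only [Pi.add_apply]
  omega

lemma one_mem_H0 {D : V.PrimeDiv → ℤ} (hD : ∀ v, 0 ≤ D v) : (1 : V.K) ∈ V.H0 D :=
  Or.inr fun v => by rw [V.div_one]; simpa using hD v

lemma algebraMap_mem_H0 (c : k) {D : V.PrimeDiv → ℤ} (hD : ∀ v, 0 ≤ D v) :
    algebraMap k V.K c ∈ V.H0 D := by
  by_cases hc : c = 0
  · subst hc; rw [map_zero]; exact (V.H0 D).zero_mem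
  exact Or.inr fun v => by rw [V.div_algebraMap]; simpa using hD v

/-! ### Multi-section rings

`R(X; D₁, …, D_s)` is realized as a subalgebra of the Laurent polynomial algebra
`k(X)[t₁^{±1}, …, t_s^{±1}] = AddMonoidAlgebra k(X) (Fin s → ℤ)` : the degree-`n`
component of a member lies in `H⁰(X, O_X(∑ᵢ nᵢ Dᵢ))`.

We work more generally with a superadditive weight function
`c : (Fin s → ℤ) → (PrimeDiv → ℤ)` (needed for the ℚ-divisor statement). -/

/-- The Laurent polynomial algebra `k(X)[t₁^{±1},…,t_s^{±1}]`. -/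
abbrev Laurent (V : NPVariety k) (s : ℕ) : Type := AddMonoidAlgebra V.K (Fin s → ℤ)

variable {s : ℕ}

/-- `degDiv D n = ∑ i, n i • D i`, the divisor attached to the degree `n`. -/
def degDiv (D : Fin s → (V.PrimeDiv →₀ ℤ)) (n : Fin s → ℤ) : V.PrimeDiv → ℤ :=
  fun v => ∑ i, n i * D i v

lemma degDiv_add (D : Fin s → (V.PrimeDiv →₀ ℤ)) (m n : Fin s → ℤ) (v : V.PrimeDiv) :
    V.degDiv D (m + n) v = V.degDiv D m v + V.degDiv D n v := by
  simp [degDiv, add_mul, Finset.sum_add_distrib]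

lemma degDiv_zero (D : Fin s → (V.PrimeDiv →₀ ℤ)) (v : V.PrimeDiv) : V.degDiv D 0 v = 0 := by
  simp [degDiv]

/-- The set of Laurent polynomials whose degree-`n` coefficient lies in `H⁰(X, O_X(w n))`. -/
def weightedSet (w : (Fin s → ℤ) → V.PrimeDiv → ℤ) : Set (Laurent V s) :=
  {x | ∀ n, x.coeff n ∈ V.H0 (w n)}

lemma mul_mem_weightedSet {c w : (Fin s → ℤ) → V.PrimeDiv → ℤ}
    (hcw : ∀ m n v, c m v + w n v ≤ w (m + n) v) {x y : Laurent V s}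
    (hx : x ∈ V.weightedSet c) (hy : y ∈ V.weightedSet w) :
    x * y ∈ V.weightedSet w := by
  classical
  intro n
  rw [AddMonoidAlgebra.coeff_mul]
  apply Submodule.finsuppSum_mem
  intro a₁ _
  apply Submodule.finsuppSum_mem
  intro a₂ _
  split_ifs with h
  · refine V.H0_mono (D := fun v => c a₁ v + w a₂ v) (fun v => by rw [← h]; exact hcw a₁ a₂ v) ?_
    exact V.H0_mul_mem (hx a₁) (hy a₂)
  · exact (V.H0 _).zero_mem

/-- The graded ring `⊕ₙ H⁰(X, O_X(c n)) tⁿ` attached to a superadditive weight `c`. -/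
def weightedRing (c : (Fin s → ℤ) → V.PrimeDiv → ℤ)
    (hsuper : ∀ m n v, c m v + c n v ≤ c (m + n) v)
    (hzero : ∀ v, 0 ≤ c 0 v) : Subalgebra k (Laurent V s) where
  carrier := V.weightedSet c
  mul_mem' hx hy := V.mul_mem_weightedSet hsuper hx hy
  one_mem' := by
    classical
    intro n
    rw [AddMonoidAlgebra.one_def, AddMonoidAlgebra.coeff_single, Finsupp.single_apply]
    split_ifs with h
    · exact V.one_mem_H0 (fun v => by rw [← h]; exact hzero v)
    · exact (V.H0 _).zero_mem
  add_mem' hx hy n := by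
    rw [AddMonoidAlgebra.coeff_add, Finsupp.add_apply]
    exact (V.H0 _).add_mem (hx n) (hy n)
  zero_mem' n := (V.H0 _).zero_mem
  algebraMap_mem' r := by
    classical
    intro n
    rw [show (algebraMap k (Laurent V s) r) = AddMonoidAlgebra.single 0 (algebraMap k V.K r) by
      rw [show (algebraMap k (Laurent V s)) r = (AddMonoidAlgebra.single 0 ∘ (algebraMap k V.K)) r
        from congrFun (AddMonoidAlgebra.coe_algebraMap) r]; rfl]
    rw [AddMonoidAlgebra.coeff_single, Finsupp.single_apply]
    split_ifs with h
    · exact V.algebraMap_mem_H0 r (fun v => by rw [← h]; exact hzero v)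
    · exact (V.H0 _).zero_mem

/-- The graded module `⊕ₙ H⁰(X, O_X(w n)) tⁿ` over a weighted ring. -/
def weightedModule (c : (Fin s → ℤ) → V.PrimeDiv → ℤ)
    (hsuper : ∀ m n v, c m v + c n v ≤ c (m + n) v) (hzero : ∀ v, 0 ≤ c 0 v)
    (w : (Fin s → ℤ) → V.PrimeDiv → ℤ)
    (hcw : ∀ m n v, c m v + w n v ≤ w (m + n) v) :
    Submodule ↥(V.weightedRing c hsuper hzero) (Laurent V s) where
  carrier := V.weightedSet w
  add_mem' {x y} hx hy n := by
    rw [AddMonoidAlgebra.coeff_add, Finsupp.add_apply]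
    exact (V.H0 _).add_mem (hx n) (hy n)
  zero_mem' n := (V.H0 _).zero_mem
  smul_mem' r x hx := by
    rw [Algebra.smul_def r x]
    exact V.mul_mem_weightedSet hcw (show (r : Laurent V s) ∈ V.weightedSet c from r.2) hx

/-- The multi-section ring `R(X; D₁, …, D_s)`. -/
def multiSection (D : Fin s → (V.PrimeDiv →₀ ℤ)) : Subalgebra k (Laurent V s) :=
  V.weightedRing (V.degDiv D)
    (fun m n v => le_of_eq (V.degDiv_add D m n v).symm)
    (fun v => le_of_eq (V.degDiv_zero D v).symm)

/-- The graded module `M_F = ⊕ₙ H⁰(X, O_X(∑ᵢ nᵢDᵢ + F)) tⁿ` over `R(X; D₁,…,D_s)`. -/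
def sectionModule (D : Fin s → (V.PrimeDiv →₀ ℤ)) (F : V.PrimeDiv →₀ ℤ) :
    Submodule ↥(V.multiSection D) (Laurent V s) :=
  V.weightedModule (V.degDiv D) _ _ (fun n v => V.degDiv D n v + F v)
    (fun m n v => by
      show V.degDiv D m v + (V.degDiv D n v + F v) ≤ V.degDiv D (m + n) v + F v
      have := V.degDiv_add D m n v
      omega)

/-- `x` is homogeneous of degree `a`. -/
def homDeg (x : Laurent V s) (a : Fin s → ℤ) : Prop := ∀ b, b ≠ a → x.coeff b = 0

/-- The maximal homogeneous ideal of a multi-section ring: the ideal generated by all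
homogeneous elements of degree different from `0`. -/
def maxIdeal (D : Fin s → (V.PrimeDiv →₀ ℤ)) : Ideal ↥(V.multiSection D) :=
  Ideal.span {r | ∃ a, a ≠ 0 ∧ V.homDeg (r : Laurent V s) a}

/-- The degree-`a` graded piece of a graded submodule of the Laurent algebra. -/
def piece {R₀ : Subalgebra k (Laurent V s)} (N : Submodule ↥R₀ (Laurent V s))
    (a : Fin s → ℤ) : AddSubgroup ↥N where
  carrier := {x | V.homDeg (x : Laurent V s) a}
  add_mem' {x y} hx hy b hb := by
    have : ((x + y : ↥N) : Laurent V s).coeff b = (x : Laurent V s).coeff b + (y : Laurent V s).coeff b := rfl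
    rw [this, hx b hb, hy b hb, add_zero]
  zero_mem' b _ := rfl
  neg_mem' {x} hx b hb := by
    have : ((-x : ↥N) : Laurent V s).coeff b = -((x : Laurent V s).coeff b) := rfl
    rw [this, hx b hb, neg_zero]

/-- The degree-`a` graded piece of a multi-section ring. -/
def ringPiece (D : Fin s → (V.PrimeDiv →₀ ℤ)) (a : Fin s → ℤ) :
    AddSubgroup ↥(V.multiSection D) where
  carrier := {x | V.homDeg (x : Laurent V s) a}
  add_mem' {x y} hx hy b hb := by
    have : ((x + y : ↥(V.multiSection D)) : Laurent V s).coeff b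
        = (x : Laurent V s).coeff b + (y : Laurent V s).coeff b := rfl
    rw [this, hx b hb, hy b hb, add_zero]
  zero_mem' b _ := rfl
  neg_mem' {x} hx b hb := by
    have : ((-x : ↥(V.multiSection D)) : Laurent V s).coeff b = -((x : Laurent V s).coeff b) := rfl
    rw [this, hx b hb, neg_zero]

end NPVariety

/-! ### The graded canonical module

Let `R` be a `Γ`-graded Noetherian `k`-algebra which is a local graded `k`-domain with
maximal homogeneous ideal `m` and `d = dim R`.  Its *canonical module* is the graded dual
`ω_R = *Hom_k(H^d_m(R), k)` of the top local cohomology module.  Concretely, a `Γ`-graded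
`R`-module `M` (with grading `𝒩`) *is* the canonical module iff there are a compatible
grading `ℬ` on `H^d_m(R)` and a `k`-bilinear, `R`-balanced, degree-pairing
`p : M × H^d_m(R) → k` which identifies each `M_a` with `Hom_k(H^d_m(R)_{-a}, k)`. -/

/-- `M` (graded by `𝒩`, with homogeneity of ring elements recorded by `homR`) is the graded
canonical module `*Hom_k(H^d_m(R), k)` of `R`. -/
def IsGradedCanonicalModule
    (k : Type) [Field k] {Γ : Type} [AddCommGroup Γ] [DecidableEq Γ]
    {R : Type} [CommRing R] [Algebra k R]
    (homR : R → Γ → Prop) (m : Ideal R) (d : ℕ)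
    {M : Type} [AddCommGroup M] [Module R M]
    (𝒩 : Γ → AddSubgroup M) : Prop :=
  DirectSum.IsInternal 𝒩 ∧
  (∀ (a b : Γ) (r : R) (x : M), homR r a → x ∈ 𝒩 b → r • x ∈ 𝒩 (a + b)) ∧
  ∃ (ℬ : Γ → AddSubgroup ((localCohomology m d).obj (ModuleCat.of R R)))
    (p : M → ((localCohomology m d).obj (ModuleCat.of R R)) → k),
    DirectSum.IsInternal ℬ ∧
    (∀ (a b : Γ) (r : R) z, homR r a → z ∈ ℬ b → r • z ∈ ℬ (a + b)) ∧
    (∀ (c : k) (a : Γ) z, z ∈ ℬ a → (algebraMap k R c) • z ∈ ℬ a) ∧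
    (∀ x y z, p (x + y) z = p x z + p y z) ∧
    (∀ x z w, p x (z + w) = p x z + p x w) ∧
    (∀ (r : R) x z, p (r • x) z = p x (r • z)) ∧
    (∀ (c : k) x z, p ((algebraMap k R c) • x) z = c * p x z) ∧
    (∀ (a b : Γ) (x : M) z, x ∈ 𝒩 a → z ∈ ℬ b → a + b ≠ 0 → p x z = 0) ∧
    (∀ (a : Γ) (x : M), x ∈ 𝒩 a → (∀ z ∈ ℬ (-a), p x z = 0) → x = 0) ∧
    (∀ (a : Γ) (f : ((localCohomology m d).obj (ModuleCat.of R R)) → k),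
      (∀ z w, f (z + w) = f z + f w) →
      (∀ (c : k) z, f ((algebraMap k R c) • z) = c * f z) →
      ∃ x ∈ 𝒩 a, ∀ z ∈ ℬ (-a), p x z = f z)

namespace NPVariety

variable {k : Type} [Field k] (V : NPVariety k) {s : ℕ}

lemma single_mem_multiSection (D : Fin s → (V.PrimeDiv →₀ ℤ)) (x : ↥(V.multiSection D))
    (a : Fin s → ℤ) :
    (AddMonoidAlgebra.single a ((x : V.Laurent s).coeff a) : V.Laurent s) ∈ V.multiSection D := by
  classical
  intro n
  rw [AddMonoidAlgebra.coeff_single, Finsupp.single_apply]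
  split_ifs with h
  · rw [← h]; exact x.2 a
  · exact (V.H0 _).zero_mem

/-- The degree-`a` homogeneous component of an element of the multi-section ring. -/
def component (D : Fin s → (V.PrimeDiv →₀ ℤ)) (x : ↥(V.multiSection D)) (a : Fin s → ℤ) :
    ↥(V.multiSection D) :=
  ⟨AddMonoidAlgebra.single a ((x : V.Laurent s).coeff a), V.single_mem_multiSection D x a⟩

/-- An ideal of the multi-section ring is homogeneous if it contains all homogeneous
components of its members. -/
def IsHomogeneousIdeal (D : Fin s → (V.PrimeDiv →₀ ℤ)) (I : Ideal ↥(V.multiSection D)) :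
    Prop :=
  ∀ x ∈ I, ∀ a : Fin s → ℤ, V.component D x a ∈ I

end NPVariety

/-!
If `O_X(E)` and `O_X(-E)` both have nonzero sections then `E` is principal, because
`H⁰(X, O_X) = k`; as the classes of the `Dᵢ` are independent, `R_a · R_{-a} = 0` for `a ≠ 0`.
Hence the degree-zero coefficient is a ring homomorphism `R → k(X)`, whose kernel contains every
homogeneous element of nonzero degree, so `m` is proper. Since `R₀ = H⁰(X, O_X) = k`, a proper
homogeneous ideal meets `R₀` only in `0` and therefore lies in `m`.
-/

namespace NPVariety

variable {k : Type} [Field k] (V : NPVariety k)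

lemma div_eq_zero_of_nonneg {f : V.K} (hf : f ≠ 0) (h : ∀ v, 0 ≤ V.div f v) :
    V.div f = 0 := by
  obtain ⟨c, rfl⟩ := V.const_of_nonneg f hf h
  exact V.div_algebraMap c

lemma exists_algebraMap_eq_of_mem_H0_zero {f : V.K} (hf : f ∈ V.H0 0) :
    ∃ c : k, algebraMap k V.K c = f := by
  by_cases hf0 : f = 0
  · exact ⟨0, by rw [map_zero, hf0]⟩
  obtain ⟨c, hc⟩ := V.const_of_nonneg f hf0 (by simpa using hf.resolve_left hf0)
  exact ⟨c, hc.symm⟩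

/-- Nonzero sections of `O_X(E)` and `O_X(-E)` multiply to a nowhere vanishing function,
which is constant because `H⁰(X, O_X) = k`; so both sections have exactly the divisor allowed. -/
lemma div_eq_neg_of_mem_H0_of_mem_H0_neg {E : V.PrimeDiv → ℤ} {f g : V.K} (hf0 : f ≠ 0)
    (hg0 : g ≠ 0) (hf : f ∈ V.H0 E) (hg : g ∈ V.H0 (-E)) : V.div f = -E := by
  have hfE : ∀ v, 0 ≤ V.div f v + E v := hf.resolve_left hf0
  have hgE : ∀ v, 0 ≤ V.div g v - E v := by simpa [← sub_eq_add_neg] using hg.resolve_left hg0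
  have hfg : V.div f + V.div g = 0 := by
    rw [← V.div_mul hf0 hg0]
    refine V.div_eq_zero_of_nonneg (mul_ne_zero hf0 hg0) fun v => ?_
    rw [V.div_mul hf0 hg0, Pi.add_apply]
    linarith [hfE v, hgE v]
  funext v
  have hv := congrFun hfg v
  simp only [Pi.add_apply, Pi.zero_apply] at hv
  simp only [Pi.neg_apply]
  linarith [hfE v, hgE v]

variable {s : ℕ}

lemma eq_single_of_homDeg {x : V.Laurent s} {a : Fin s → ℤ} (hx : V.homDeg x a) :
    x = AddMonoidAlgebra.single a (x.coeff a) := by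
  classical
  ext b
  rw [AddMonoidAlgebra.coeff_single, Finsupp.single_apply]
  split_ifs with hab
  · rw [hab]
  · exact hx b (Ne.symm hab)

variable (D : Fin s → (V.PrimeDiv →₀ ℤ))

lemma degDiv_zero' : V.degDiv D 0 = 0 :=
  funext (V.degDiv_zero D)

lemma degDiv_neg (a : Fin s → ℤ) : V.degDiv D (-a) = -V.degDiv D a :=
  funext fun v => by simp [degDiv]

lemma sum_smul_apply (n : Fin s → ℤ) (v : V.PrimeDiv) :
    (∑ i, n i • D i) v = V.degDiv D n v := by
  simp [degDiv, Finsupp.finsetSum_apply]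

/-- The classes of the `Dᵢ` in `Cl(X)` are linearly independent over `ℤ`. -/
def IndependentClasses : Prop :=
  ∀ n : Fin s → ℤ, V.LinEquiv (∑ i, n i • D i) 0 → n = 0

variable {V D}

lemma coeff_mul_coeff_neg_eq_zero
    (hindep : V.IndependentClasses D)
    (x y : V.multiSection D) {a : Fin s → ℤ} (ha : a ≠ 0) :
    (x : V.Laurent s).coeff a * (y : V.Laurent s).coeff (-a) = 0 := by
  by_contra hxy
  obtain ⟨hx0, hy0⟩ := mul_ne_zero_iff.mp hxy
  have hy : (y : V.Laurent s).coeff (-a) ∈ V.H0 (-V.degDiv D a) := V.degDiv_neg D a ▸ y.2 (-a)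
  have hdiv := V.div_eq_neg_of_mem_H0_of_mem_H0_neg hx0 hy0 (x.2 a) hy
  refine ha (neg_eq_zero.mp (hindep (-a) ⟨_, hx0, fun v => ?_⟩))
  rw [hdiv, V.sum_smul_apply, V.degDiv_neg]
  simp

lemma coeff_zero_mul (hindep : V.IndependentClasses D)
    (x y : V.multiSection D) :
    ((x * y : V.multiSection D) : V.Laurent s).coeff 0
      = (x : V.Laurent s).coeff 0 * (y : V.Laurent s).coeff 0 := by
  rw [MulMemClass.coe_mul, AddMonoidAlgebra.coeff_mul_apply_left, Finsupp.sum_eq_single 0]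
  · rw [neg_zero, zero_add]
  · intro a _ ha
    rw [add_zero]
    exact coeff_mul_coeff_neg_eq_zero hindep x y ha
  · intro _
    exact zero_mul _

variable (D) in
def coeffAddHom (a : Fin s → ℤ) : V.multiSection D →+ V.K where
  toFun x := (x : V.Laurent s).coeff a
  map_zero' := rfl
  map_add' _ _ := rfl

def coeffZeroRingHom (hindep : V.IndependentClasses D) :
    V.multiSection D →+* V.K :=
  { coeffAddHom D 0 with
    map_one' := by
      change (1 : V.Laurent s).coeff 0 = 1
      rw [AddMonoidAlgebra.one_def, AddMonoidAlgebra.coeff_single, Finsupp.single_eq_same]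
    map_mul' := coeff_zero_mul hindep }

lemma maxIdeal_le_ker_coeffZeroRingHom
    (hindep : V.IndependentClasses D) :
    V.maxIdeal D ≤ RingHom.ker (coeffZeroRingHom hindep) :=
  Ideal.span_le.mpr fun _ ⟨_, ha, hr⟩ => hr 0 (Ne.symm ha)

lemma maxIdeal_ne_top (hindep : V.IndependentClasses D) :
    V.maxIdeal D ≠ ⊤ :=
  ne_top_of_le_ne_top (RingHom.ker_ne_top _) (maxIdeal_le_ker_coeffZeroRingHom hindep)

lemma exists_algebraMap_eq_of_homDeg_zero {r : V.multiSection D}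
    (hr : V.homDeg (r : V.Laurent s) 0) : ∃ c : k, r = algebraMap k (V.multiSection D) c := by
  have hr0 : (r : V.Laurent s).coeff 0 ∈ V.H0 0 := V.degDiv_zero' D ▸ r.2 0
  obtain ⟨c, hc⟩ := V.exists_algebraMap_eq_of_mem_H0_zero hr0
  refine ⟨c, Subtype.ext ?_⟩
  rw [V.eq_single_of_homDeg hr, ← hc]
  rfl

lemma eq_zero_of_homDeg_zero_of_mem {I : Ideal (V.multiSection D)} (hI : I ≠ ⊤)
    {r : V.multiSection D} (hr : V.homDeg (r : V.Laurent s) 0) (hrI : r ∈ I) : r = 0 := by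
  obtain ⟨c, rfl⟩ := exists_algebraMap_eq_of_homDeg_zero hr
  by_cases hc : c = 0
  · rw [hc, map_zero]
  · exact absurd (I.eq_top_of_isUnit_mem hrI ((isUnit_iff_ne_zero.mpr hc).map _)) hI

lemma component_mem_ringPiece (x : V.multiSection D) (a : Fin s → ℤ) :
    V.component D x a ∈ V.ringPiece D a :=
  fun _ hb => Finsupp.single_eq_of_ne' (Ne.symm hb)

lemma sum_component (x : V.multiSection D) :
    ∑ a ∈ (x : V.Laurent s).coeff.support, V.component D x a = x := by
  apply Subtype.ext
  rw [AddSubmonoidClass.coe_finsetSum]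
  exact AddMonoidAlgebra.sum_coeff_single (x : V.Laurent s)

lemma le_maxIdeal_of_isHomogeneousIdeal {I : Ideal (V.multiSection D)}
    (hI : V.IsHomogeneousIdeal D I) (hI_ne_top : I ≠ ⊤) : I ≤ V.maxIdeal D := by
  intro x hx
  rw [← sum_component x]
  refine Ideal.sum_mem _ fun a _ => ?_
  by_cases ha : a = 0
  · subst ha
    rw [eq_zero_of_homDeg_zero_of_mem hI_ne_top (component_mem_ringPiece x 0) (hI x hx 0)]
    exact Ideal.zero_mem _
  · exact Ideal.subset_span ⟨a, ha, component_mem_ringPiece x a⟩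

lemma iSup_ringPiece_eq_top : ⨆ a, V.ringPiece D a = ⊤ := by
  refine eq_top_iff.mpr fun x _ => ?_
  rw [← sum_component x]
  exact AddSubgroup.sum_mem _ fun a _ =>
    AddSubgroup.mem_iSup_of_mem a (component_mem_ringPiece x a)

lemma iSupIndep_ringPiece : iSupIndep (V.ringPiece D) := by
  refine fun a => disjoint_iff_inf_le.mpr fun x ⟨hxa, hx⟩ => ?_
  have hle : ⨆ (b) (_ : b ≠ a), V.ringPiece D b ≤ (coeffAddHom D a).ker :=
    iSup₂_le fun b hb y hy => hy a (Ne.symm hb)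
  have hxa0 : (x : V.Laurent s).coeff a = 0 := hle hx
  refine Subtype.ext ((V.eq_single_of_homDeg hxa).trans ?_)
  rw [hxa0, AddMonoidAlgebra.single_zero]
  rfl

lemma isInternal_ringPiece : DirectSum.IsInternal (V.ringPiece D) :=
  (DirectSum.isInternal_submodule_iff_iSupIndep_and_iSup_eq_top
    fun a => (V.ringPiece D a).toIntSubmodule).mpr
    ⟨iSupIndep_ringPiece.map_orderIso AddSubgroup.toIntSubmodule,
      by rw [← AddSubgroup.toIntSubmodule.map_iSup, iSup_ringPiece_eq_top]; rfl⟩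

end NPVariety

theorem multiSection_local_graded_domain_general
    (k : Type) [Field k] (V : NPVariety k) (s : ℕ) (D : Fin s → (V.PrimeDiv →₀ ℤ))
    (hindep : ∀ n : Fin s → ℤ, V.LinEquiv (∑ i, n i • D i) 0 → n = 0) :
    IsDomain ↥(V.multiSection D) ∧
    DirectSum.IsInternal (V.ringPiece D) ∧
    (∀ r : ↥(V.multiSection D), V.homDeg (r : V.Laurent s) 0 →
      ∃ c : k, r = algebraMap k ↥(V.multiSection D) c) ∧
    V.maxIdeal D ≠ ⊤ ∧
    (∀ I : Ideal ↥(V.multiSection D), V.IsHomogeneousIdeal D I → I ≠ ⊤ →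
      I ≤ V.maxIdeal D) :=
  ⟨inferInstance, NPVariety.isInternal_ringPiece,
    fun _ => NPVariety.exists_algebraMap_eq_of_homDeg_zero,
    NPVariety.maxIdeal_ne_top hindep, fun _ => NPVariety.le_maxIdeal_of_isHomogeneousIdeal⟩

/-- **Lemma.** Let `X` be a normal projective variety over `k` with `H⁰(X, O_X) = k`, and
let `D₁,…,D_s` be Weil divisors whose classes are `ℤ`-linearly independent in `Cl(X)`
such that `R = R(X; D₁,…,D_s)` is Noetherian.  Then `R` is a local `ℤˢ`-graded `k`-domain:
it is a Noetherian `ℤˢ`-graded domain, its degree-`0` component is `k`, and the ideal `m`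
generated by all homogeneous elements of degree `≠ 0` is proper — hence `m` is the unique
maximal homogeneous ideal. -/
theorem multiSection_local_graded_domain
    (k : Type) [Field k] (V : NPVariety k) (s : ℕ) (D : Fin s → (V.PrimeDiv →₀ ℤ))
    (hindep : ∀ n : Fin s → ℤ, V.LinEquiv (∑ i, n i • D i) 0 → n = 0)
    (hnoeth : IsNoetherianRing ↥(V.multiSection D)) :
    IsDomain ↥(V.multiSection D) ∧
    DirectSum.IsInternal (V.ringPiece D) ∧
    (∀ r : ↥(V.multiSection D), V.homDeg (r : V.Laurent s) 0 →
      ∃ c : k, r = algebraMap k ↥(V.multiSection D) c) ∧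
    V.maxIdeal D ≠ ⊤ ∧
    (∀ I : Ideal ↥(V.multiSection D), V.IsHomogeneousIdeal D I → I ≠ ⊤ →
      I ≤ V.maxIdeal D) :=
  multiSection_local_graded_domain_general k V s D hindep
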